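/- arXiv:2012.10303 — 5 statements merged into one kernel-verified Lean document; each statement's English description precedes it below -/
import Mathlib

section
/- The supremum defining the spherical cap discrepancy is attained: there exist w* ∈ S^{n-1} and t* ∈ [−1,1] such that Δ = |μ_emp(w*,t*) − μ_cap(w*,t*)|. -/
open scoped Classical BigOperators

noncomputable def muEmp {n N : ℕ} (x : Fin N → (Fin n → ℝ)) (w : Fin n → ℝ) (t : ℝ) : ℝ :=
  (Finset.univ.filter fun i => t ≤ ∑ j, w j * x i j).card / N

noncomputable def muCap (n : ℕ) (t : ℝ) : ℝ :=
  if 0 ≤ t then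
    (∫ τ in (0:ℝ)..Real.pi, Real.sin τ ^ (n - 2))⁻¹ * ∫ τ in (0:ℝ)..Real.arccos t, Real.sin τ ^ (n - 2)
  else
    1 - (∫ τ in (0:ℝ)..Real.pi, Real.sin τ ^ (n - 2))⁻¹ * ∫ τ in (0:ℝ)..Real.arccos (-t), Real.sin τ ^ (n - 2)

noncomputable def locDisc {n N : ℕ} (x : Fin N → (Fin n → ℝ)) (w : Fin n → ℝ) (t : ℝ) : ℝ :=
  |muEmp x w t - muCap n t|

noncomputable def capDisc {n N : ℕ} (x : Fin N → (Fin n → ℝ)) : ℝ :=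
  sSup {d : ℝ | ∃ w t, (∑ j, w j ^ 2 = 1) ∧ t ∈ Set.Icc (-1:ℝ) 1 ∧ d = locDisc x w t}

/-!
The signed discrepancy `D(w, t) = μ_emp(w, t) - μ_cap(t)` is upper semicontinuous (closed caps
contain their limit points, and `μ_cap` is continuous), so it attains its maximum `M` on the
compact set `S^{n-1} × [-1, 1]`. The antipodal pair `(-w, -t)` turns a large negative value
into a large positive one: since the two closed caps cover the sphere while the two cap measures
add up to `1`, `-D(w, t) ≤ D(-w, -t) ≤ M`. Hence `|D| ≤ |M|` everywhere, and `|M|` is attained.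
-/

open Real

theorem exists_isMaxOn_abs_of_neg_le {X : Type*} [TopologicalSpace X] {K : Set X} {f : X → ℝ}
    (hK : IsCompact K) (hne : K.Nonempty) (hf : UpperSemicontinuousOn f K)
    (hneg : ∀ p ∈ K, ∃ q ∈ K, -f p ≤ f q) :
    ∃ z ∈ K, IsMaxOn (fun p => |f p|) K z := by
  obtain ⟨z, hzK, hz⟩ := hf.exists_isMaxOn hne hK
  refine ⟨z, hzK, fun p hp => ?_⟩
  obtain ⟨q, hqK, hq⟩ := hneg p hp
  have hfp : f p ≤ f z := hz hp
  have hfq : f q ≤ f z := hz hqK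
  exact abs_le_abs hfp (by linarith)

theorem isCompact_setOf_sum_sq_eq_one (n : ℕ) :
    IsCompact {w : Fin n → ℝ | ∑ j, w j ^ 2 = 1} := by
  convert (isCompact_sphere (0 : EuclideanSpace ℝ (Fin n)) 1).image (PiLp.continuous_ofLp 2 _)
    using 1
  ext w
  simpa [EuclideanSpace.norm_eq] using
    ⟨fun h => ⟨WithLp.toLp 2 w, h, rfl⟩, by rintro ⟨v, hv, rfl⟩; exact hv⟩

section muCap

theorem two_mul_integral_sin_pow_half_pi (m : ℕ) :
    2 * ∫ τ in (0:ℝ)..π / 2, sin τ ^ m = ∫ τ in (0:ℝ)..π, sin τ ^ m := by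
  have h := intervalIntegral.integral_comp_sub_left (fun τ => cos τ ^ m) (π / 2)
    (a := 0) (b := π / 2)
  simp only [cos_pi_div_two_sub, sub_zero, sub_self] at h
  rw [h, EulerSine.integral_cos_pow_eq]
  ring

theorem inv_integral_sin_pow_mul_integral_half_pi (m : ℕ) :
    (∫ τ in (0:ℝ)..π, sin τ ^ m)⁻¹ * ∫ τ in (0:ℝ)..π / 2, sin τ ^ m = 1 / 2 := by
  rw [← two_mul_integral_sin_pow_half_pi]
  have hpos : 0 < ∫ τ in (0:ℝ)..π / 2, sin τ ^ m := by
    have := integral_sin_pow_pos m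
    rw [← two_mul_integral_sin_pow_half_pi] at this
    linarith
  field_simp

theorem continuous_muCap (n : ℕ) : Continuous (muCap n) := by
  have hI : Continuous fun u => ∫ τ in (0:ℝ)..u, sin τ ^ (n - 2) :=
    intervalIntegral.continuous_primitive
      (fun a b => (continuous_sin.pow _).intervalIntegrable a b) 0
  refine Continuous.if_le (continuous_const.mul (hI.comp continuous_arccos))
    (continuous_const.sub (continuous_const.mul (hI.comp (continuous_arccos.comp continuous_neg))))
    continuous_const continuous_id fun t ht => ?_
  subst ht
  rw [neg_zero, arccos_zero, inv_integral_sin_pow_mul_integral_half_pi]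
  norm_num

theorem muCap_add_muCap_neg (n : ℕ) (t : ℝ) : muCap n t + muCap n (-t) = 1 := by
  rcases lt_trichotomy t 0 with h | rfl | h
  · rw [muCap, muCap, if_neg h.not_ge, if_pos (neg_nonneg.2 h.le)]
    ring
  · rw [neg_zero, muCap, if_pos le_rfl, arccos_zero, inv_integral_sin_pow_mul_integral_half_pi]
    norm_num
  · rw [muCap, muCap, if_pos h.le, if_neg (by linarith), neg_neg]
    ring

end muCap

section muEmp

variable {n N : ℕ} (x : Fin N → (Fin n → ℝ))

theorem upperSemicontinuous_muEmp :
    UpperSemicontinuous fun p : (Fin n → ℝ) × ℝ => muEmp x p.1 p.2 := by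
  have hsum : (fun p : (Fin n → ℝ) × ℝ => muEmp x p.1 p.2) = fun p => ∑ i : Fin N,
      {q : (Fin n → ℝ) × ℝ | q.2 ≤ ∑ j, q.1 j * x i j}.indicator (fun _ => (N : ℝ)⁻¹) p := by
    funext p
    simp only [muEmp, Finset.card_filter, Nat.cast_sum, Finset.sum_div, Set.indicator_apply,
      Set.mem_ofPred_eq]
    refine Finset.sum_congr rfl fun i _ => ?_
    split_ifs <;> simp
  rw [hsum]
  refine upperSemicontinuous_sum fun i _ =>
    IsClosed.upperSemicontinuous_indicator ?_ (by positivity)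
  exact isClosed_le continuous_snd (continuous_finsetSum _ fun j _ =>
    ((continuous_apply j).comp continuous_fst).mul continuous_const)

theorem one_le_muEmp_add_muEmp_neg (hN : 0 < N) (w : Fin n → ℝ) (t : ℝ) :
    1 ≤ muEmp x w t + muEmp x (-w) (-t) := by
  have hcover : (Finset.univ.filter fun i => t ≤ ∑ j, w j * x i j) ∪
      (Finset.univ.filter fun i => -t ≤ ∑ j, (-w) j * x i j) = Finset.univ := by
    ext i
    simp only [Finset.mem_union, Finset.mem_filter, Finset.mem_univ, true_and, iff_true,
      Pi.neg_apply, neg_mul, Finset.sum_neg_distrib, neg_le_neg_iff]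
    exact le_total _ _
  have hcard := Finset.card_union_le (Finset.univ.filter fun i => t ≤ ∑ j, w j * x i j)
    (Finset.univ.filter fun i => -t ≤ ∑ j, (-w) j * x i j)
  rw [hcover, Finset.card_univ, Fintype.card_fin] at hcard
  rw [muEmp, muEmp, ← add_div, le_div_iff₀ (by exact_mod_cast hN), one_mul]
  exact_mod_cast hcard

end muEmp

theorem upperSemicontinuous_muEmp_sub_muCap {n N : ℕ} (x : Fin N → (Fin n → ℝ)) :
    UpperSemicontinuous fun p : (Fin n → ℝ) × ℝ => muEmp x p.1 p.2 - muCap n p.2 := by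
  simp only [sub_eq_add_neg]
  exact (upperSemicontinuous_muEmp x).add
    ((continuous_muCap n).comp continuous_snd).neg.upperSemicontinuous

theorem neg_muEmp_sub_muCap_le {n N : ℕ} (hN : 0 < N) (x : Fin N → (Fin n → ℝ))
    (w : Fin n → ℝ) (t : ℝ) :
    -(muEmp x w t - muCap n t) ≤ muEmp x (-w) (-t) - muCap n (-t) := by
  linarith [one_le_muEmp_add_muEmp_neg x hN w t, muCap_add_muCap_neg n t]

theorem statement4_general {n N : ℕ} (hn : 2 ≤ n) (hN : 0 < N)
    (x : Fin N → (Fin n → ℝ)) :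
    ∃ w : Fin n → ℝ, ∃ t : ℝ, (∑ j, w j ^ 2 = 1) ∧ t ∈ Set.Icc (-1:ℝ) 1 ∧
      capDisc x = |muEmp x w t - muCap n t| := by
  set K : Set ((Fin n → ℝ) × ℝ) := {w | ∑ j, w j ^ 2 = 1} ×ˢ Set.Icc (-1) 1
  have hK : IsCompact K := (isCompact_setOf_sum_sq_eq_one n).prod isCompact_Icc
  have hne : K.Nonempty := by
    refine ⟨(Pi.single ⟨0, by omega⟩ 1, 0), ?_, by norm_num, by norm_num⟩
    simp [Pi.single_apply, apply_ite (· ^ 2 : ℝ → ℝ)]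
  have hneg (p) (hp : p ∈ K) : ∃ q ∈ K, -(muEmp x p.1 p.2 - muCap n p.2) ≤
      muEmp x q.1 q.2 - muCap n q.2 := by
    refine ⟨(-p.1, -p.2), ⟨?_, ?_, ?_⟩, neg_muEmp_sub_muCap_le hN x p.1 p.2⟩
    · simpa using hp.1
    · linarith [hp.2.2]
    · linarith [hp.2.1]
  obtain ⟨z, ⟨hz₁, hz₂⟩, hz⟩ := exists_isMaxOn_abs_of_neg_le hK hne
    ((upperSemicontinuous_muEmp_sub_muCap x).upperSemicontinuousOn K) hneg
  refine ⟨z.1, z.2, hz₁, hz₂, IsGreatest.csSup_eq ⟨⟨z.1, z.2, hz₁, hz₂, rfl⟩, ?_⟩⟩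
  rintro d ⟨w, t, hw, ht, rfl⟩
  exact hz (a := (w, t)) ⟨hw, ht⟩

theorem statement4 {n N : ℕ} (hn : 2 ≤ n) (hN : 0 < N)
    (x : Fin N → (Fin n → ℝ)) (hx : ∀ i, ∑ j, x i j ^ 2 = 1) :
    ∃ w : Fin n → ℝ, ∃ t : ℝ, (∑ j, w j ^ 2 = 1) ∧ t ∈ Set.Icc (-1:ℝ) 1 ∧
      capDisc x = |muEmp x w t - muCap n t| :=
  statement4_general hn hN x
end

section
/- If (w*,t*) realizes the spherical cap discrepancy, i.e. Δ = |μ_emp(w*,t*) − μ_cap(w*,t*)| with Δ the supremum of local discrepancies, then there exists an index i ∈ {1,...,N} with ⟨w*,x^i⟩ = t*; that is, the discrepancy-realizing cap contains at least one sample point on its relative boundary. -/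
open scoped Classical BigOperators

/-! If no sample point lies on the hyperplane `⟨w, ·⟩ = t`, then `s ↦ μ_emp(w, s)` is constant
near `t` while `μ_cap` is strictly decreasing, so moving `t` slightly increases the local
discrepancy unless `t` is the endpoint of `[-1, 1]` towards which it grows. At `t = -1` both
measures equal `1`, and at `t = 1` both equal `0` (no sample has `⟨w, x^i⟩ = 1`), so neither
endpoint case can occur. -/

open Set Filter Topology Real

noncomputable def sinPowIntegral (k : ℕ) (θ : ℝ) : ℝ :=
  ∫ τ in (0 : ℝ)..θ, sin τ ^ k

lemma continuous_sinPowIntegral (k : ℕ) : Continuous (sinPowIntegral k) :=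
  intervalIntegral.continuous_primitive
    (fun a b => (continuous_sin.pow k).intervalIntegrable a b) 0

lemma sinPowIntegral_strictMonoOn (k : ℕ) : StrictMonoOn (sinPowIntegral k) (Icc 0 π) := by
  refine strictMonoOn_of_deriv_pos (convex_Icc 0 π) (continuous_sinPowIntegral k).continuousOn
    fun θ hθ => ?_
  rw [interior_Icc] at hθ
  rw [show sinPowIntegral k = fun u => ∫ τ in (0 : ℝ)..u, sin τ ^ k from rfl,
    Continuous.deriv_integral (fun τ => sin τ ^ k) (continuous_sin.pow k)]
  exact pow_pos (sin_pos_of_pos_of_lt_pi hθ.1 hθ.2) k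

lemma sinPowIntegral_pi_pos (k : ℕ) : 0 < sinPowIntegral k π := by
  simpa [sinPowIntegral] using
    sinPowIntegral_strictMonoOn k (left_mem_Icc.2 pi_nonneg) (right_mem_Icc.2 pi_nonneg) pi_pos

lemma sinPowIntegral_pi_sub (k : ℕ) (θ : ℝ) :
    sinPowIntegral k (π - θ) = sinPowIntegral k π - sinPowIntegral k θ := by
  have hint : ∀ a b : ℝ, IntervalIntegrable (fun τ => sin τ ^ k) MeasureTheory.volume a b :=
    fun a b => (continuous_sin.pow k).intervalIntegrable a b
  calc sinPowIntegral k (π - θ) = ∫ τ in (0 : ℝ)..π - θ, sin (π - τ) ^ k := by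
        simp only [sinPowIntegral, sin_pi_sub]
    _ = ∫ τ in θ..π, sin τ ^ k := by
        rw [intervalIntegral.integral_comp_sub_left (fun τ => sin τ ^ k) π]; simp
    _ = sinPowIntegral k π - sinPowIntegral k θ :=
        (intervalIntegral.integral_interval_sub_left (hint 0 π) (hint 0 θ)).symm

lemma muCap_eq (n : ℕ) (t : ℝ) :
    muCap n t = (sinPowIntegral (n - 2) π)⁻¹ * sinPowIntegral (n - 2) (arccos t) := by
  have hpos := sinPowIntegral_pi_pos (n - 2)
  unfold muCap
  split_ifs
  · rfl
  · change 1 - (sinPowIntegral (n - 2) π)⁻¹ * sinPowIntegral (n - 2) (arccos (-t)) = _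
    rw [arccos_neg, sinPowIntegral_pi_sub]
    field_simp
    ring

lemma muCap_strictAntiOn (n : ℕ) : StrictAntiOn (muCap n) (Icc (-1) 1) := by
  have hcomp := (sinPowIntegral_strictMonoOn (n - 2)).comp_strictAntiOn strictAntiOn_arccos
    fun t _ => ⟨arccos_nonneg t, arccos_le_pi t⟩
  intro s hs t ht hst
  rw [muCap_eq, muCap_eq]
  exact mul_lt_mul_of_pos_left (hcomp hs ht hst) (inv_pos.2 (sinPowIntegral_pi_pos _))

lemma muCap_one (n : ℕ) : muCap n 1 = 0 := by
  simp [muCap]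

lemma muCap_neg_one (n : ℕ) : muCap n (-1) = 1 := by
  simp [muCap]

lemma muCap_mem_Icc (n : ℕ) {t : ℝ} (ht : t ∈ Icc (-1 : ℝ) 1) : muCap n t ∈ Icc (0 : ℝ) 1 := by
  have hanti := (muCap_strictAntiOn n).antitoneOn
  constructor
  · simpa [muCap_one] using hanti ht (right_mem_Icc.2 (by norm_num)) ht.2
  · simpa [muCap_neg_one] using hanti (left_mem_Icc.2 (by norm_num)) ht ht.1

lemma abs_sum_mul_le_one {ι : Type*} [Fintype ι] {u v : ι → ℝ} (hu : ∑ j, u j ^ 2 = 1)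
    (hv : ∑ j, v j ^ 2 = 1) : |∑ j, u j * v j| ≤ 1 := by
  rw [← sq_le_one_iff_abs_le_one]
  simpa [hu, hv] using Finset.sum_mul_sq_le_sq_mul_sq Finset.univ u v

lemma eventually_le_iff_le_of_ne {α : Type*} [LinearOrder α] [TopologicalSpace α]
    [OrderTopology α] {y t : α} (h : y ≠ t) : ∀ᶠ s in 𝓝 t, (s ≤ y ↔ t ≤ y) := by
  rcases h.lt_or_gt with h | h
  · filter_upwards [eventually_gt_nhds h] with s hs
    exact iff_of_false (not_le.2 hs) (not_le.2 h)
  · filter_upwards [eventually_lt_nhds h] with s hs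
    exact iff_of_true hs.le h.le

section muEmp

variable {n N : ℕ} (x : Fin N → (Fin n → ℝ)) (w : Fin n → ℝ)

lemma muEmp_mem_Icc (t : ℝ) : muEmp x w t ∈ Icc (0 : ℝ) 1 :=
  ⟨by unfold muEmp; positivity,
    div_le_one_of_le₀ (by exact_mod_cast (Finset.card_filter_le _ _).trans (by simp))
      (Nat.cast_nonneg N)⟩

lemma locDisc_le_capDisc (hw : ∑ j, w j ^ 2 = 1) {t : ℝ} (ht : t ∈ Icc (-1 : ℝ) 1) :
    locDisc x w t ≤ capDisc x := by
  refine le_csSup ⟨1, ?_⟩ ⟨w, t, hw, ht, rfl⟩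
  rintro _ ⟨w', t', -, ht', rfl⟩
  obtain ⟨he₀, he₁⟩ := muEmp_mem_Icc x w' t'
  obtain ⟨hc₀, hc₁⟩ := muCap_mem_Icc n ht'
  exact abs_sub_le_iff.2 ⟨by linarith, by linarith⟩

lemma muEmp_eventually_eq {t : ℝ} (hmiss : ∀ i, ∑ j, w j * x i j ≠ t) :
    ∀ᶠ s in 𝓝 t, muEmp x w s = muEmp x w t := by
  filter_upwards [eventually_all.2 fun i => eventually_le_iff_le_of_ne (hmiss i)] with s hs
  simp only [muEmp, hs]

variable {x w}

lemma muEmp_neg_one (hN : 0 < N) (hx : ∀ i, ∑ j, x i j ^ 2 = 1) (hw : ∑ j, w j ^ 2 = 1) :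
    muEmp x w (-1) = 1 := by
  have hall : ∀ i, -1 ≤ ∑ j, w j * x i j := fun i => (abs_le.1 (abs_sum_mul_le_one hw (hx i))).1
  simp [muEmp, hall, hN.ne']

lemma muEmp_one (hx : ∀ i, ∑ j, x i j ^ 2 = 1) (hw : ∑ j, w j ^ 2 = 1)
    (hmiss : ∀ i, ∑ j, w j * x i j ≠ 1) : muEmp x w 1 = 0 := by
  have hnone : ∀ i, ¬ 1 ≤ ∑ j, w j * x i j := fun i h =>
    hmiss i (le_antisymm (abs_le.1 (abs_sum_mul_le_one hw (hx i))).2 h)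
  simp [muEmp, hnone]

end muEmp

lemma StrictAntiOn.eq_endpoint_of_isLocalMaxOn_abs_sub {g : ℝ → ℝ} {a b c t : ℝ}
    (hg : StrictAntiOn g (Icc a b)) (hab : a < b) (ht : t ∈ Icc a b)
    (hmax : IsLocalMaxOn (fun s => |c - g s|) (Icc a b) t) :
    (t = a ∧ c < g a) ∨ (t = b ∧ g b < c) := by
  have hup : t < b → c < g t := fun htb => by
    by_contra! hle
    have := left_nhdsWithin_Ioo_neBot htb
    obtain ⟨s, habs, hs⟩ := ((hmax.filter_mono (nhdsWithin_mono _
      (Ioo_subset_Icc_self.trans (Icc_subset_Icc_left ht.1)))).and self_mem_nhdsWithin).exists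
    have hgs := hg ht ⟨ht.1.trans hs.1.le, hs.2.le⟩ hs.1
    dsimp only at habs
    rw [abs_of_nonneg (sub_nonneg.2 hle), abs_of_pos (by linarith)] at habs
    linarith
  have hdown : a < t → g t < c := fun hat => by
    by_contra! hle
    have := right_nhdsWithin_Ioo_neBot hat
    obtain ⟨s, habs, hs⟩ := ((hmax.filter_mono (nhdsWithin_mono _
      (Ioo_subset_Icc_self.trans (Icc_subset_Icc_right ht.2)))).and self_mem_nhdsWithin).exists
    have hgs := hg ⟨hs.1.le, hs.2.le.trans ht.2⟩ ht hs.2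
    dsimp only at habs
    rw [abs_of_nonpos (sub_nonpos.2 hle), abs_of_neg (by linarith)] at habs
    linarith
  rcases ht.1.eq_or_lt with rfl | hat
  · exact Or.inl ⟨rfl, hup hab⟩
  rcases ht.2.eq_or_lt with rfl | htb
  · exact Or.inr ⟨rfl, hdown hat⟩
  exact absurd (hup htb) (hdown hat).asymm

theorem statement5_general {n N : ℕ} (hN : 0 < N)
    (x : Fin N → (Fin n → ℝ)) (hx : ∀ i, ∑ j, x i j ^ 2 = 1)
    (w : Fin n → ℝ) (t : ℝ) (hw : ∑ j, w j ^ 2 = 1) (ht : t ∈ Set.Icc (-1:ℝ) 1)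
    (hreal : capDisc x = |muEmp x w t - muCap n t|) :
    ∃ i, ∑ j, w j * x i j = t := by
  by_contra! hmiss
  have hmax : IsLocalMaxOn (fun s => |muEmp x w t - muCap n s|) (Icc (-1) 1) t := by
    filter_upwards [nhdsWithin_le_nhds (muEmp_eventually_eq x w hmiss), self_mem_nhdsWithin]
      with s hs hsI
    rw [← hreal, ← hs]
    exact locDisc_le_capDisc x w hw hsI
  rcases (muCap_strictAntiOn n).eq_endpoint_of_isLocalMaxOn_abs_sub (by norm_num) ht hmax with
    ⟨rfl, hlt⟩ | ⟨rfl, hgt⟩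
  · simp [muEmp_neg_one hN hx hw, muCap_neg_one] at hlt
  · simp [muEmp_one hx hw hmiss, muCap_one] at hgt

theorem statement5 {n N : ℕ} (hn : 2 ≤ n) (hN : 0 < N)
    (x : Fin N → (Fin n → ℝ)) (hx : ∀ i, ∑ j, x i j ^ 2 = 1)
    (w : Fin n → ℝ) (t : ℝ) (hw : ∑ j, w j ^ 2 = 1) (ht : t ∈ Set.Icc (-1:ℝ) 1)
    (hreal : capDisc x = |muEmp x w t - muCap n t|) :
    ∃ i, ∑ j, w j * x i j = t :=
  statement5_general hN x hx w t hw ht hreal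
end

section
/- Let x^1,...,x^k ∈ S^{n-1} be such that the vectors (x^i,−1) ∈ ℝ^{n+1} are linearly independent, let X be the n×k matrix with columns x^i, X̃ = (X; −1ᵀ) the (n+1)×k matrix with an added row of −1's, and γ = 1ᵀ(X̃ᵀX̃)^{-1}1. If (w*,t*) is a local maximizer of t over the set {(w,t) : Xᵀw = t·1, ⟨w,w⟩ = 1}, then 0 < γ ≤ 1; moreover, if γ < 1 then t* = ±((1−γ)/γ)^{1/2} and w* = ((1+t*²)/t*)·X(X̃ᵀX̃)^{-1}1, while γ = 1 holds if and only if t* = 0. -/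
/-!
At a local maximizer the Lagrange conditions give multipliers `(c, μ) ≠ 0` with
`∑ cᵢ xⁱ = μ w`. Pairing with `w` gives `μ = t ∑ cᵢ`, and linear independence of the lifted
vectors `(xⁱ, -1)` forbids `∑ cᵢ = 0`; after normalising, `∑ cᵢ = 1` and `∑ cᵢ xⁱ = t w`,
i.e. `X̃ c = (t w, -1)`. Since `⟨xⁱ, w⟩ = t`, this gives `X̃ᵀ X̃ c = (1 + t²) 𝟙`, so
`c = (1 + t²) (X̃ᵀ X̃)⁻¹ 𝟙`. Summing the coordinates yields `γ = 1 / (1 + t²)`, and the first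
`n` rows of `X̃ c` yield `t w = (1 + t²) X (X̃ᵀ X̃)⁻¹ 𝟙`; the rest is arithmetic.
-/

open Matrix

theorem snoc_dotProduct_snoc {R : Type*} [Mul R] [AddCommMonoid R] {n : ℕ}
    (u v : Fin n → R) (a b : R) :
    (Fin.snoc u a : Fin (n + 1) → R) ⬝ᵥ Fin.snoc v b = u ⬝ᵥ v + a * b := by
  simp [dotProduct, Fin.sum_univ_castSucc]

theorem sum_smul_snoc {R ι : Type*} [Semiring R] [Fintype ι] {n : ℕ} (x : ι → Fin n → R)
    (a : R) (c : ι → R) :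
    ∑ i, c i • (Fin.snoc (x i) a : Fin (n + 1) → R) =
      Fin.snoc (∑ i, c i • x i) ((∑ i, c i) * a) := by
  ext j
  refine Fin.lastCases ?_ (fun j => ?_) j <;> simp [Finset.sum_apply, Finset.sum_mul]

theorem mulVec_eq_sum_smul_col {R m ι : Type*} [CommSemiring R] [Fintype ι]
    (A : Matrix m ι R) (c : ι → R) :
    A *ᵥ c = ∑ i, c i • Aᵀ i := by
  rw [← vecMul_transpose, vecMul_eq_sum]

theorem isUnit_transpose_mul_self {m ι : Type*} [Fintype m] [Fintype ι] [DecidableEq ι]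
    (A : Matrix m ι ℝ) (hA : LinearIndependent ℝ A.col) :
    IsUnit (Aᵀ * A) := by
  simpa using (PosDef.conjTranspose_mul_self A (mulVec_injective_iff.2 hA)).isUnit

theorem exists_sum_smul_eq_smul_of_isLocalMaxOn {ι : Type*} [Fintype ι] {n : ℕ}
    {x : ι → Fin n → ℝ} {w : Fin n → ℝ} {t : ℝ}
    (hwx : ∀ i, ∑ j, w j * x i j = t) (hw : ∑ j, w j ^ 2 = 1)
    (hlocal : IsLocalMaxOn (fun q : (Fin n → ℝ) × ℝ => q.2)
      {q | (∀ i, ∑ j, q.1 j * x i j = q.2) ∧ ∑ j, q.1 j ^ 2 = 1} (w, t)) :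
    ∃ (c : ι → ℝ) (μ : ℝ), (c, μ) ≠ 0 ∧ ∑ i, c i • x i = μ • w := by
  let π : Fin n → (Fin n → ℝ) × ℝ →L[ℝ] ℝ := fun j =>
    (ContinuousLinearMap.proj j).comp (ContinuousLinearMap.fst ℝ _ ℝ)
  let snd := ContinuousLinearMap.snd ℝ (Fin n → ℝ) ℝ
  let f : Option ι → (Fin n → ℝ) × ℝ → ℝ := fun o q =>
    o.elim (∑ j, q.1 j ^ 2) fun i => ∑ j, q.1 j * x i j - q.2
  let f' : Option ι → (Fin n → ℝ) × ℝ →L[ℝ] ℝ := fun o =>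
    o.elim (∑ j, (2 * w j) • π j) fun i => ∑ j, x i j • π j - snd
  have hf' : ∀ o, HasStrictFDerivAt (f o) (f' o) (w, t) := by
    rintro (_ | i)
    · exact HasStrictFDerivAt.fun_sum fun j _ =>
        ((π j).hasStrictFDerivAt.pow 2).congr_fderiv (by simp [π])
    · exact (HasStrictFDerivAt.fun_sum fun j _ =>
        (π j).hasStrictFDerivAt.mul_const (x i j)).sub snd.hasStrictFDerivAt
  have hset : {q | ∀ o, f o q = f o (w, t)} =
      {q | (∀ i, ∑ j, q.1 j * x i j = q.2) ∧ ∑ j, q.1 j ^ 2 = 1} := by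
    ext q
    simp [f, Option.forall, hw, hwx, sub_eq_zero, and_comm]
  have hextr : IsLocalExtrOn (fun q => q.2) {q | ∀ o, f o q = f o (w, t)} (w, t) :=
    hset ▸ .inr hlocal
  obtain ⟨Λ, Λ₀, hΛ, hΛf⟩ :=
    hextr.exists_multipliers_of_hasStrictFDerivAt hf' snd.hasStrictFDerivAt
  -- the `t`- and `w m`-components of the multiplier identity
  have hΛ₀ : ∑ i, Λ (some i) = Λ₀ := by
    simpa [f', π, snd, Fintype.sum_option, neg_add_eq_zero] using DFunLike.congr_fun hΛf (0, 1)
  have hgrad : ∀ m, Λ none * (2 * w m) + ∑ i, Λ (some i) * x i m = 0 := fun m => by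
    simpa [f', π, snd, Fintype.sum_option, Pi.single_apply] using
      DFunLike.congr_fun hΛf (Pi.single m 1, 0)
  refine ⟨fun i => Λ (some i), -(2 * Λ none), ?_, ?_⟩
  · contrapose! hΛ
    obtain ⟨hc, hμ⟩ := Prod.mk_eq_zero.1 hΛ
    have hΛ0 : Λ = 0 := by
      ext (_ | i)
      · simpa using hμ
      · exact congrFun hc i
    simp [hΛ0, ← hΛ₀]
  · ext m
    simp only [Finset.sum_apply, Pi.smul_apply, smul_eq_mul, neg_mul]
    linarith [hgrad m]

theorem exists_sum_eq_one_and_sum_smul_eq_smul {ι : Type*} [Fintype ι] {n : ℕ}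
    {x : ι → Fin n → ℝ} {w : Fin n → ℝ} {t μ : ℝ} {c : ι → ℝ}
    (hind : LinearIndependent ℝ fun i => (Fin.snoc (x i) (-1) : Fin (n + 1) → ℝ))
    (hwx : ∀ i, w ⬝ᵥ x i = t) (hw : w ⬝ᵥ w = 1) (hcμ : (c, μ) ≠ 0)
    (hc : ∑ i, c i • x i = μ • w) :
    ∃ c' : ι → ℝ, ∑ i, c' i = 1 ∧ ∑ i, c' i • x i = t • w := by
  have hμ : μ = t * ∑ i, c i := by
    simpa [dotProduct_sum, dotProduct_smul, hwx, hw, Finset.mul_sum, mul_comm] using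
      (congrArg (w ⬝ᵥ ·) hc).symm
  have hs : ∑ i, c i ≠ 0 := by
    intro hs
    rw [hs, mul_zero] at hμ
    subst hμ
    refine hcμ (Prod.mk_eq_zero.2 ⟨Fintype.linearIndependent_iff.1 hind c ?_ |> funext, rfl⟩)
    rw [sum_smul_snoc, hc, hs, zero_smul, zero_mul]
    funext j
    refine Fin.lastCases ?_ (fun j => ?_) j <;> simp
  refine ⟨(∑ i, c i)⁻¹ • c, ?_, ?_⟩
  · simp only [Pi.smul_apply, smul_eq_mul, ← Finset.mul_sum, inv_mul_cancel₀ hs]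
  · simp only [Pi.smul_apply, smul_eq_mul, mul_smul, ← Finset.smul_sum, hc, hμ]
    rw [smul_smul, smul_smul, mul_right_comm, inv_mul_cancel₀ hs, one_mul]

theorem transpose_mul_self_mulVec_eq {ι : Type*} [Fintype ι] {n : ℕ}
    {x : ι → Fin n → ℝ} {A : Matrix (Fin (n + 1)) ι ℝ}
    (hA : ∀ i, Aᵀ i = Fin.snoc (x i) (-1)) {w : Fin n → ℝ} {t : ℝ} {c : ι → ℝ}
    (hwx : ∀ i, w ⬝ᵥ x i = t) (hc1 : ∑ i, c i = 1) (hcx : ∑ i, c i • x i = t • w) :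
    (Aᵀ * A) *ᵥ c = (1 + t ^ 2) • fun _ => 1 := by
  have hAc : A *ᵥ c = Fin.snoc (t • w) (-1) := by
    rw [mulVec_eq_sum_smul_col]
    simp only [hA, sum_smul_snoc, hcx, hc1, one_mul]
  ext i
  rw [← mulVec_mulVec, hAc]
  change Aᵀ i ⬝ᵥ _ = _
  rw [hA, snoc_dotProduct_snoc, dotProduct_smul, dotProduct_comm, hwx]
  simp only [smul_eq_mul, Pi.smul_apply]
  ring

theorem eq_sqrt_or_eq_neg_sqrt_of_eq_inv_one_add_sq {γ t : ℝ} (hγ : γ = (1 + t ^ 2)⁻¹) :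
    t = √((1 - γ) / γ) ∨ t = -√((1 - γ) / γ) := by
  have ht : (1 - γ) / γ = t ^ 2 := by
    rw [hγ]
    field_simp
    ring
  rw [ht, Real.sqrt_sq_eq_abs]
  exact (abs_eq (abs_nonneg t)).1 rfl

theorem statement8_general {n k : ℕ} (x : Fin k → (Fin n → ℝ))
    (X : Matrix (Fin n) (Fin k) ℝ) (hX : X = Matrix.of fun j i => x i j)
    (Xt : Matrix (Fin (n+1)) (Fin k) ℝ)
    (hXt : Xt = Matrix.of fun j i => (Fin.snoc (x i) (-1 : ℝ) : Fin (n+1) → ℝ) j)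
    (hrank : LinearIndependent ℝ (fun i => Xtᵀ i))
    (γ : ℝ) (hγ : γ = ∑ i, ((Xtᵀ * Xt)⁻¹ *ᵥ fun _ => (1:ℝ)) i)
    (w : Fin n → ℝ) (t : ℝ)
    (hfeas : (∀ i, ∑ j, w j * x i j = t) ∧ ∑ j, w j ^ 2 = 1)
    (hlocal : IsLocalMaxOn (fun q : (Fin n → ℝ) × ℝ => q.2)
      {q : (Fin n → ℝ) × ℝ | (∀ i, ∑ j, q.1 j * x i j = q.2) ∧ ∑ j, q.1 j ^ 2 = 1} (w, t)) :
    (0 < γ ∧ γ ≤ 1) ∧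
    (γ < 1 → (t = Real.sqrt ((1 - γ) / γ) ∨ t = -Real.sqrt ((1 - γ) / γ)) ∧
      w = ((1 + t ^ 2) / t) • (X *ᵥ ((Xtᵀ * Xt)⁻¹ *ᵥ fun _ => (1:ℝ)))) ∧
    (γ = 1 ↔ t = 0) := by
  obtain ⟨hwx, hw⟩ := hfeas
  have hXcol : ∀ i, Xᵀ i = x i := fun i => by rw [hX]; rfl
  have hXtcol : ∀ i, Xtᵀ i = Fin.snoc (x i) (-1) := fun i => by rw [hXt]; rfl
  set u := (Xtᵀ * Xt)⁻¹ *ᵥ fun _ => (1 : ℝ)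
  obtain ⟨c, μ, hcμ, hcx⟩ := exists_sum_smul_eq_smul_of_isLocalMaxOn hwx hw hlocal
  obtain ⟨c, hc1, hcx⟩ := exists_sum_eq_one_and_sum_smul_eq_smul
    (by simpa only [hXtcol] using hrank) hwx (by simpa [dotProduct, sq] using hw) hcμ hcx
  have hcu : c = (1 + t ^ 2) • u := by
    rw [← mulVec_smul, ← transpose_mul_self_mulVec_eq hXtcol hwx hc1 hcx, mulVec_mulVec,
      nonsing_inv_mul _ ((isUnit_iff_isUnit_det _).1 (isUnit_transpose_mul_self Xt hrank)),
      one_mulVec]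
  have hγt : γ = (1 + t ^ 2)⁻¹ := by
    refine eq_inv_of_mul_eq_one_left ?_
    calc γ * (1 + t ^ 2) = ∑ i, c i := by
          simp only [hγ, hcu, Pi.smul_apply, smul_eq_mul, ← Finset.mul_sum, mul_comm]
      _ = 1 := hc1
  have hwu : t • w = (1 + t ^ 2) • (X *ᵥ u) := by
    rw [← mulVec_smul, ← hcu, mulVec_eq_sum_smul_col]
    simpa only [hXcol] using hcx.symm
  have hγ_eq_one : γ = 1 ↔ t = 0 := by simp [hγt]
  refine ⟨⟨hγt ▸ by positivity, hγt ▸ inv_le_one_of_one_le₀ (le_add_of_nonneg_right (sq_nonneg t))⟩,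
    fun hlt => ⟨eq_sqrt_or_eq_neg_sqrt_of_eq_inv_one_add_sq hγt, ?_⟩, hγ_eq_one⟩
  have ht : t ≠ 0 := fun ht => hlt.ne (hγ_eq_one.2 ht)
  rw [div_eq_inv_mul, mul_smul, ← hwu, smul_smul, inv_mul_cancel₀ ht, one_smul]

theorem statement8 {n k : ℕ} (x : Fin k → (Fin n → ℝ)) (hx : ∀ i, ∑ j, x i j ^ 2 = 1)
    (X : Matrix (Fin n) (Fin k) ℝ) (hX : X = Matrix.of fun j i => x i j)
    (Xt : Matrix (Fin (n+1)) (Fin k) ℝ)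
    (hXt : Xt = Matrix.of fun j i => (Fin.snoc (x i) (-1 : ℝ) : Fin (n+1) → ℝ) j)
    (hrank : LinearIndependent ℝ (fun i => Xtᵀ i))
    (γ : ℝ) (hγ : γ = ∑ i, ((Xtᵀ * Xt)⁻¹ *ᵥ fun _ => (1:ℝ)) i)
    (w : Fin n → ℝ) (t : ℝ)
    (hfeas : (∀ i, ∑ j, w j * x i j = t) ∧ ∑ j, w j ^ 2 = 1)
    (hlocal : IsLocalMaxOn (fun q : (Fin n → ℝ) × ℝ => q.2)
      {q : (Fin n → ℝ) × ℝ | (∀ i, ∑ j, q.1 j * x i j = q.2) ∧ ∑ j, q.1 j ^ 2 = 1} (w, t)) :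
    (0 < γ ∧ γ ≤ 1) ∧
    (γ < 1 → (t = Real.sqrt ((1 - γ) / γ) ∨ t = -Real.sqrt ((1 - γ) / γ)) ∧
      w = ((1 + t ^ 2) / t) • (X *ᵥ ((Xtᵀ * Xt)⁻¹ *ᵥ fun _ => (1:ℝ)))) ∧
    (γ = 1 ↔ t = 0) :=
  statement8_general x X hX Xt hXt hrank γ hγ w t hfeas hlocal
end

section
/- Under the hypotheses of the previous setting (X̃ of full column rank k, (w*,t*) a local maximizer of t subject to Xᵀw = t·1 and ‖w‖=1), if γ = 1ᵀ(X̃ᵀX̃)^{-1}1 = 1, then t* = 0 and rank X = k − 1. -/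
open scoped BigOperators
open Matrix

theorem statement9 {n k : ℕ} (x : Fin k → (Fin n → ℝ)) (hx : ∀ i, ∑ j, x i j ^ 2 = 1)
    (X : Matrix (Fin n) (Fin k) ℝ) (hX : X = Matrix.of fun j i => x i j)
    (Xt : Matrix (Fin (n+1)) (Fin k) ℝ)
    (hXt : Xt = Matrix.of fun j i => (Fin.snoc (x i) (-1 : ℝ) : Fin (n+1) → ℝ) j)
    (hrank : LinearIndependent ℝ (fun i => Xtᵀ i))
    (γ : ℝ) (hγ : γ = ∑ i, ((Xtᵀ * Xt)⁻¹ *ᵥ fun _ => (1:ℝ)) i)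
    (w : Fin n → ℝ) (t : ℝ)
    (hfeas : (∀ i, ∑ j, w j * x i j = t) ∧ ∑ j, w j ^ 2 = 1)
    (hlocal : IsLocalMaxOn (fun q : (Fin n → ℝ) × ℝ => q.2)
      {q : (Fin n → ℝ) × ℝ | (∀ i, ∑ j, q.1 j * x i j = q.2) ∧ ∑ j, q.1 j ^ 2 = 1} (w, t))
    (hγ1 : γ = 1) :
    t = 0 ∧ X.rank = k - 1 := by
  classical
  set G : Matrix (Fin k) (Fin k) ℝ := Xtᵀ * Xt with hG
  -- columns of Xt are linearly independent:
  have colind : ∀ v : Fin k → ℝ, Xt *ᵥ v = 0 → v = 0 := by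
    intro v hv
    have := Fintype.linearIndependent_iff.mp hrank v ?_
    · exact funext this
    · funext j
      have hvj := congrFun hv j
      simp only [mulVec, dotProduct, Pi.zero_apply] at hvj
      simp only [Finset.sum_apply, Pi.smul_apply, transpose_apply, smul_eq_mul, Pi.zero_apply]
      rw [← hvj]
      exact Finset.sum_congr rfl fun i _ => mul_comm _ _
  -- dot product identity
  have key : ∀ v : Fin k → ℝ, v ⬝ᵥ (G *ᵥ v) = (Xt *ᵥ v) ⬝ᵥ (Xt *ᵥ v) := by
    intro v
    rw [hG, ← mulVec_mulVec, dotProduct_mulVec, vecMul_transpose]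
  have Gker : ∀ v : Fin k → ℝ, G *ᵥ v = 0 → v = 0 := by
    intro v hv
    apply colind
    have h0 : (Xt *ᵥ v) ⬝ᵥ (Xt *ᵥ v) = 0 := by rw [← key, hv, dotProduct_zero]
    funext j
    have hnn : ∀ j ∈ Finset.univ, (0:ℝ) ≤ (Xt *ᵥ v) j * (Xt *ᵥ v) j :=
      fun j _ => mul_self_nonneg _
    have := (Finset.sum_eq_zero_iff_of_nonneg hnn).mp h0 j (Finset.mem_univ j)
    exact mul_self_eq_zero.mp this
  have hGunit : IsUnit G := by
    rw [← Matrix.mulVec_injective_iff_isUnit]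
    intro a b hab
    have : G *ᵥ (a - b) = 0 := by rw [mulVec_sub, hab, sub_self]
    have := Gker _ this
    exact sub_eq_zero.mp this
  set l : Fin k → ℝ := G⁻¹ *ᵥ (fun _ => (1:ℝ)) with hl
  have hGl : G *ᵥ l = fun _ => (1:ℝ) := by
    rw [hl, mulVec_mulVec, Matrix.mul_nonsing_inv _ ((Matrix.isUnit_iff_isUnit_det _).mp hGunit),
      one_mulVec]
  have hsum : ∑ i, l i = 1 := by rw [← hγ1, hγ]
  -- norm of Xt *ᵥ l
  have hnorm : (Xt *ᵥ l) ⬝ᵥ (Xt *ᵥ l) = 1 := by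
    rw [← key, hGl]
    simpa [dotProduct] using hsum
  have hXtlast : ∀ i, Xt (Fin.last n) i = -1 := by
    intro i; rw [hXt]; simp
  have hXtcast : ∀ (j : Fin n) i, Xt (Fin.castSucc j) i = x i j := by
    intro j i; rw [hXt]; simp
  have hlast : (Xt *ᵥ l) (Fin.last n) = -1 := by
    simp only [mulVec, dotProduct, hXtlast, neg_one_mul]
    rw [Finset.sum_neg_distrib, hsum]
  have hcastzero : ∀ j : Fin n, (Xt *ᵥ l) (Fin.castSucc j) = 0 := by
    have hsq : ∑ j : Fin (n+1), (Xt *ᵥ l) j * (Xt *ᵥ l) j = 1 := hnorm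
    rw [Fin.sum_univ_castSucc, hlast] at hsq
    have h0 : ∑ j : Fin n, (Xt *ᵥ l) (Fin.castSucc j) * (Xt *ᵥ l) (Fin.castSucc j) = 0 := by
      linarith
    intro j
    have := (Finset.sum_eq_zero_iff_of_nonneg
      (fun j _ => mul_self_nonneg ((Xt *ᵥ l) (Fin.castSucc j)))).mp h0 j (Finset.mem_univ j)
    exact mul_self_eq_zero.mp this
  have hXl : ∀ j : Fin n, ∑ i, x i j * l i = 0 := by
    intro j
    have := hcastzero j
    simp only [mulVec, dotProduct, hXtcast] at this
    exact this
  have ht : t = 0 := by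
    have h1 : ∑ i, l i * t = t := by
      rw [← Finset.sum_mul, hsum, one_mul]
    have h2 : ∑ i, l i * t = 0 := by
      have : ∀ i, l i * t = ∑ j, l i * (w j * x i j) := by
        intro i; rw [← Finset.mul_sum, hfeas.1 i]
      rw [Finset.sum_congr rfl fun i _ => this i, Finset.sum_comm]
      apply Finset.sum_eq_zero
      intro j _
      have : ∑ i, l i * (w j * x i j) = w j * ∑ i, x i j * l i := by
        rw [Finset.mul_sum]; exact Finset.sum_congr rfl fun i _ => by ring
      rw [this, hXl, mul_zero]
    rw [← h1, h2]
  refine ⟨ht, ?_⟩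
  -- rank
  have hXl' : X *ᵥ l = 0 := by
    funext j
    simp only [mulVec, dotProduct, hX, of_apply, Pi.zero_apply]
    exact hXl j
  have hlne : l ≠ 0 := by
    intro h
    rw [h] at hsum
    simp at hsum
  have hker : LinearMap.ker X.mulVecLin = Submodule.span ℝ {l} := by
    apply le_antisymm
    · intro v hv
      rw [LinearMap.mem_ker, mulVecLin_apply] at hv
      set c : ℝ := ∑ i, v i with hc
      have hz : Xt *ᵥ (v - c • l) = 0 := by
        funext j
        refine Fin.lastCases ?_ ?_ j
        · simp only [mulVec, dotProduct, hXtlast, Pi.zero_apply, Pi.sub_apply, Pi.smul_apply,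
            smul_eq_mul]
          calc ∑ i, -1 * (v i - c * l i) = ∑ i, (-(v i) + c * l i) :=
                Finset.sum_congr rfl fun i _ => by ring
            _ = -(∑ i, v i) + c * ∑ i, l i := by
                rw [Finset.sum_add_distrib, Finset.sum_neg_distrib, ← Finset.mul_sum]
            _ = 0 := by rw [hsum, hc]; ring
        · intro j
          have h1 := congrFun hv j
          have h2 := hXl j
          simp only [mulVec, dotProduct, hXtcast, Pi.zero_apply, Pi.sub_apply, Pi.smul_apply,
            smul_eq_mul, hX, of_apply] at h1 ⊢
          have : ∑ i, x i j * (v i - c * l i) = (∑ i, x i j * v i) - c * ∑ i, x i j * l i := by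
            rw [Finset.mul_sum, ← Finset.sum_sub_distrib]
            exact Finset.sum_congr rfl fun i _ => by ring
          rw [this, h2, mul_zero, sub_zero]
          exact h1
      have := colind _ hz
      have hveq : v = c • l := by
        have := sub_eq_zero.mp this
        exact this
      rw [hveq]
      exact Submodule.smul_mem _ _ (Submodule.mem_span_singleton_self l)
    · rw [Submodule.span_le, Set.singleton_subset_iff]
      rw [SetLike.mem_coe, LinearMap.mem_ker, mulVecLin_apply]
      exact hXl'
  have hrn := LinearMap.finrank_range_add_finrank_ker X.mulVecLin
  rw [hker] at hrn
  rw [finrank_span_singleton hlne] at hrn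
  have hfr : Module.finrank ℝ (Fin k → ℝ) = k := by simp
  rw [hfr] at hrn
  have : X.rank = Module.finrank ℝ (LinearMap.range X.mulVecLin) := rfl
  omega
end

section
/- Under the hypotheses of Lemma on rank selection: given a sample x^1,...,x^N ∈ S^{n-1} and w₀ ∈ S^{n-1} with I₀ = {i : ⟨w₀,x^i⟩ = 0} ≠ ∅, if w₀ maximizes μ_emp(·,0) over Ker(X_{I₀}ᵀ) ∩ S^{n-1} and rank X̃_{I₀} < min{n, rank X̃}, rank X_{I₀} = rank X̃_{I₀} − 1, then the set J₀ = {j : ⟨w₀,x^j⟩ > 0} is nonempty. -/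
open scoped Classical BigOperators

theorem statement15 {n N : ℕ} (x : Fin N → (Fin n → ℝ)) (hx : ∀ i, ∑ j, x i j ^ 2 = 1)
    (w0 : Fin n → ℝ) (hw0 : ∑ j, w0 j ^ 2 = 1)
    (I0 : Finset (Fin N)) (hI0 : I0 = Finset.univ.filter fun i => ∑ j, w0 j * x i j = 0)
    (hI0ne : I0.Nonempty)
    (hmax : ∀ w : Fin n → ℝ, (∑ j, w j ^ 2 = 1) → (∀ i ∈ I0, ∑ j, w j * x i j = 0) →
      muEmp x w 0 ≤ muEmp x w0 0)
    (hr1 : Module.finrank ℝ (Submodule.span ℝ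
        ((fun i => (Fin.snoc (x i) (-1 : ℝ) : Fin (n+1) → ℝ)) '' ↑I0))
      < min n (Module.finrank ℝ (Submodule.span ℝ
        (Set.range fun i : Fin N => (Fin.snoc (x i) (-1 : ℝ) : Fin (n+1) → ℝ)))))
    (hr2 : Module.finrank ℝ (Submodule.span ℝ (x '' ↑I0)) + 1
      = Module.finrank ℝ (Submodule.span ℝ
        ((fun i => (Fin.snoc (x i) (-1 : ℝ) : Fin (n+1) → ℝ)) '' ↑I0))) :
    ∃ jdx : Fin N, 0 < ∑ j, w0 j * x jdx j := by
  by_contra hpos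
  push_neg at hpos
  obtain ⟨i0, hi0⟩ := hI0ne
  have hN : (0:ℝ) < N := by
    have : N ≠ 0 := by rintro rfl; exact i0.elim0
    exact_mod_cast Nat.pos_of_ne_zero this
  have hall : ∀ i, ∑ j, w0 j * x i j = 0 := by
    intro i
    by_contra hne
    have hlt : ∑ j, w0 j * x i j < 0 := lt_of_le_of_ne (hpos i) hne
    have hneg : muEmp x (fun j => -w0 j) 0 = 1 := by
      unfold muEmp
      have : (Finset.univ.filter fun k => (0:ℝ) ≤ ∑ j, (-w0 j) * x k j) = Finset.univ := by
        apply Finset.filter_true_of_mem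
        intro k _
        have : ∑ j, (-w0 j) * x k j = -(∑ j, w0 j * x k j) := by
          rw [← Finset.sum_neg_distrib]; congr 1; ext j; ring
        rw [this]
        linarith [hpos k]
      rw [this, Finset.card_univ, Fintype.card_fin]
      field_simp
    have hsq : ∑ j, (-w0 j) ^ 2 = 1 := by
      rw [← hw0]; congr 1; ext j; ring
    have hker : ∀ k ∈ I0, ∑ j, (-w0 j) * x k j = 0 := by
      intro k hk
      rw [hI0, Finset.mem_filter] at hk
      have : ∑ j, (-w0 j) * x k j = -(∑ j, w0 j * x k j) := by
        rw [← Finset.sum_neg_distrib]; congr 1; ext j; ring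
      rw [this, hk.2, neg_zero]
    have h1 := hmax (fun j => -w0 j) hsq hker
    rw [hneg] at h1
    have hcard : ((Finset.univ.filter fun k => (0:ℝ) ≤ ∑ j, w0 j * x k j).card : ℝ) ≥ N := by
      unfold muEmp at h1
      have := (le_div_iff₀ hN).mp h1
      linarith
    have hsub : (Finset.univ.filter fun k => (0:ℝ) ≤ ∑ j, w0 j * x k j) = Finset.univ := by
      apply Finset.eq_univ_of_card
      have hle : (Finset.univ.filter fun k => (0:ℝ) ≤ ∑ j, w0 j * x k j).card ≤ N := by
        simpa [Fintype.card_fin] using (Finset.card_filter_le Finset.univ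
          (fun k => (0:ℝ) ≤ ∑ j, w0 j * x k j))
      have hge : N ≤ (Finset.univ.filter fun k => (0:ℝ) ≤ ∑ j, w0 j * x k j).card := by
        exact_mod_cast hcard
      simpa [Fintype.card_fin] using le_antisymm hle hge
    have : (0:ℝ) ≤ ∑ j, w0 j * x i j := by
      have := Finset.mem_filter.mp (hsub ▸ Finset.mem_univ i)
      exact this.2
    linarith
  have hI0univ : I0 = Finset.univ := by
    rw [hI0]
    apply Finset.filter_true_of_mem
    intro k _
    exact hall k
  have hset : ((I0 : Set (Fin N))) = Set.univ := by
    rw [hI0univ]; simp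
  rw [hset, Set.image_univ] at hr1
  have := lt_of_lt_of_le hr1 (min_le_right _ _)
  exact lt_irrefl _ this
end
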